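/- arXiv:2507.01521 — 3 statements merged into one kernel-verified Lean document; each statement's English description precedes it below -/
import Mathlib

section
/- Let F be a function on the circle with |F| ≤ 1, supported on a union of k disjoint segments each of length at most 2π/2^m, with mean zero on each segment, and total variation O(k). For j > m, let T = F - 2^{j-2} F * χ_{[-2^{2-j},2^{2-j}]}. Then ∫|T|^2 ≤ C·k/2^j, i.e. the L^2 norm squared of the dyadic Fourier block P_j(F) (frequencies 2^j ≤ |n| < 2^{j+1}) is at most C·μ_m/2^{j-m} with μ_m = k/2^m. -/
/-!
Let `f` be the `2π`-periodic extension of `F`, `h = 2π / 2^(j+2)` and `g = f - f(· - h)`.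
Translation by `h` multiplies the `n`-th Fourier coefficient by `e^{-inh}`, and on the block
`2^j ≤ |n| < 2^(j+1)` the phase `nh` lies in `[π/2, π]` up to sign, so `|1 - e^{-inh}| ≥ 1` and
Bessel bounds the block by `(2π)⁻¹ ∫ |g|²`. Since `|g| ≤ 2` this is at most `(2π)⁻¹ · 2 ∫ |g|`,
and `∫ |g| ≤ 2h · Var F`: on `(h, 2π]` the increments of `F` are dominated by those of its
variation function, whose translates telescope, and on the wrap-around piece `(0, h]` each value
is at most `Var F`. Hence the block is at most `Var F / 2^j ≤ Cv · k / 2^j`.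
-/

open MeasureTheory intervalIntegral Set AddCircle

/-- The `n`-th Fourier coefficient of a function on the circle `[0, 2π]`. -/
noncomputable def fc (F : ℝ → ℂ) (n : ℤ) : ℂ :=
  (2 * (Real.pi : ℂ))⁻¹ * ∫ x in (0 : ℝ)..(2 * Real.pi), F x * Complex.exp (-Complex.I * n * x)

/-- The squared `ℓ²`-norm of the dyadic Fourier block `2^j ≤ |n| < 2^{j+1}`. -/
noncomputable def blockSq (F : ℝ → ℂ) (j : ℕ) : ℝ :=
  ∑ n ∈ (Finset.Icc (-(2 ^ (j + 1) : ℤ)) (2 ^ (j + 1))).filter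
      (fun n => 2 ^ j ≤ n.natAbs ∧ n.natAbs < 2 ^ (j + 1)),
    ‖fc F n‖ ^ 2

theorem LocallyBoundedVariationOn.dist_le_variationOnFromTo {α E : Type*} [LinearOrder α]
    [PseudoMetricSpace E] {f : α → E} {s : Set α} (hf : LocallyBoundedVariationOn f s)
    {x y : α} (hx : x ∈ s) (hy : y ∈ s) (hxy : x ≤ y) :
    dist (f x) (f y) ≤ variationOnFromTo f s x y := by
  rw [variationOnFromTo.eq_of_le f s hxy]
  exact BoundedVariationOn.dist_le (hf x y hx hy) ⟨hx, le_rfl, hxy⟩ ⟨hy, hxy, le_rfl⟩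

theorem MonotoneOn.intervalIntegral_le_of_le_sub_comp_sub {φ ψ : ℝ → ℝ} {a b h : ℝ}
    (hφ : MonotoneOn φ (Icc a b)) (hψ : IntervalIntegrable ψ volume (a + h) b)
    (hψφ : ∀ x ∈ Ioo (a + h) b, ψ x ≤ φ x - φ (x - h)) (hh : 0 ≤ h) (hab : a + h ≤ b) :
    ∫ x in (a + h)..b, ψ x ≤ h * (φ b - φ a) := by
  have hint : ∀ {c d}, c ∈ Icc a b → d ∈ Icc a b → IntervalIntegrable φ volume c d :=
    fun hc hd => (hφ.mono (uIcc_subset_Icc hc hd)).intervalIntegrable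
  have hb : b ∈ Icc a b := ⟨by linarith, le_rfl⟩
  have ha : a ∈ Icc a b := ⟨le_rfl, by linarith⟩
  have hah : a + h ∈ Icc a b := ⟨by linarith, hab⟩
  have hbh : b - h ∈ Icc a b := ⟨by linarith, by linarith⟩
  have hint_shift : IntervalIntegrable (fun x => φ (x - h)) volume (a + h) b := by
    simpa using (hint ha hbh).comp_sub_right h
  have hshift : ∫ x in (a + h)..b, φ (x - h) = ∫ x in a..(b - h), φ x := by
    simp [intervalIntegral.integral_comp_sub_right]
  have htop : ∫ x in (b - h)..b, φ x ≤ h * φ b := by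
    have := integral_mono_on (by linarith) (hint hbh hb) intervalIntegrable_const
      fun x hx => hφ ⟨by linarith [hx.1, hbh.1], hx.2⟩ hb hx.2
    simpa using this
  have hbot : h * φ a ≤ ∫ x in a..(a + h), φ x := by
    have := integral_mono_on (by linarith) intervalIntegrable_const (hint ha hah)
      fun x hx => hφ ha ⟨hx.1, by linarith [hx.2]⟩ hx.1
    simpa using this
  calc ∫ x in (a + h)..b, ψ x ≤ ∫ x in (a + h)..b, (φ x - φ (x - h)) :=
        integral_mono_on_of_le_Ioo hab hψ ((hint hah hb).sub hint_shift) hψφ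
    _ = (∫ x in (b - h)..b, φ x) - ∫ x in a..(a + h), φ x := by
        rw [integral_sub (hint hah hb) hint_shift, hshift,
          ← integral_add_adjacent_intervals (hint hah hbh) (hint hbh hb),
          ← integral_add_adjacent_intervals (hint ha hah) (hint hah hbh)]
        ring
    _ ≤ h * (φ b - φ a) := by linarith

theorem one_le_norm_one_sub_exp_ofReal_mul_I {θ : ℝ} (hθ : Real.cos θ ≤ 0) :
    1 ≤ ‖1 - Complex.exp (θ * Complex.I)‖ := by
  calc (1 : ℝ) ≤ (1 - Complex.exp (θ * Complex.I)).re := by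
        simpa only [Complex.sub_re, Complex.one_re, Complex.exp_ofReal_mul_I_re, le_sub_self_iff]
    _ ≤ _ := Complex.re_le_norm _

theorem one_le_norm_one_sub_fourier_dyadic {T : ℝ} (hT : 0 < T) {j : ℕ} {n : ℤ}
    (hn₁ : 2 ^ j ≤ |n|) (hn₂ : |n| ≤ 2 ^ (j + 1)) :
    1 ≤ ‖1 - fourier (-n) ((T / 2 ^ (j + 2) : ℝ) : AddCircle T)‖ := by
  have hpi := Real.pi_pos
  set θ : ℝ := -(Real.pi * n / 2 ^ (j + 1)) with hθ
  have hfourier : (fourier (-n) ((T / 2 ^ (j + 2) : ℝ) : AddCircle T) : ℂ)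
      = Complex.exp (θ * Complex.I) := by
    have hT' : (T : ℂ) ≠ 0 := by exact_mod_cast hT.ne'
    rw [fourier_coe_apply]
    congr 1
    push_cast [hθ]
    field_simp
    ring
  have habs : |θ| = Real.pi * |(n : ℝ)| / 2 ^ (j + 1) := by
    rw [hθ, abs_neg, abs_div, abs_mul, abs_of_pos hpi, abs_pow, abs_two]
  have hn₁' : (2 : ℝ) ^ j ≤ |(n : ℝ)| := by exact_mod_cast hn₁
  have hn₂' : |(n : ℝ)| ≤ 2 ^ (j + 1) := by exact_mod_cast hn₂
  rw [hfourier]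
  apply one_le_norm_one_sub_exp_ofReal_mul_I
  rw [← Real.cos_abs, habs]
  apply Real.cos_nonpos_of_pi_div_two_le_of_le
  · rw [le_div_iff₀ (by positivity), pow_succ]
    nlinarith [mul_le_mul_of_nonneg_left hn₁' hpi.le]
  · rw [div_le_iff₀ (by positivity)]
    nlinarith [mul_le_mul_of_nonneg_left hn₂' hpi.le, pow_pos (two_pos : (0:ℝ) < 2) (j + 1)]

namespace AddCircle

variable {T : ℝ} [hT : Fact (0 < T)]

section fourierCoeff

variable {E : Type*} [NormedAddCommGroup E] [NormedSpace ℂ E]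

theorem fourierCoeff_comp_sub (f : AddCircle T → E) (c : AddCircle T) (n : ℤ) :
    fourierCoeff (fun y => f (y - c)) n = fourier (-n) c • fourierCoeff f n := by
  rw [fourierCoeff, fourierCoeff, ← MeasureTheory.integral_smul,
    ← integral_add_right_eq_self _ c]
  congr 1 with y
  rw [add_sub_cancel_right, fourier_apply, fourier_apply, fourier_apply, zsmul_add, toCircle_add,
    Circle.coe_mul, smul_smul, mul_comm]

theorem fourierCoeff_sub_comp_sub {f : AddCircle T → E} (hf : Integrable f haarAddCircle)
    (c : AddCircle T) (n : ℤ) :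
    fourierCoeff (fun y => f y - f (y - c)) n = (1 - fourier (-n) c : ℂ) • fourierCoeff f n := by
  have hfc : Integrable (fun y => f (y - c)) haarAddCircle :=
    (measurePreserving_sub_right haarAddCircle c).integrable_comp_of_integrable hf
  rw [sub_smul, one_smul, ← fourierCoeff_comp_sub, fourierCoeff, fourierCoeff, fourierCoeff,
    ← integral_sub (hf.fourier_smul _) (hfc.fourier_smul _)]
  simp only [smul_sub]

theorem sum_sq_norm_fourierCoeff_le {f : AddCircle T → ℂ} (hf : MemLp f 2 haarAddCircle)
    (S : Finset ℤ) :
    ∑ n ∈ S, ‖fourierCoeff f n‖ ^ 2 ≤ ∫ y, ‖f y‖ ^ 2 ∂haarAddCircle := by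
  have hL2 := hasSum_sq_fourierCoeff (hf.toLp f)
  rw [fourierCoeff_congr_ae hf.coeFn_toLp] at hL2
  have hnorm : ∫ y, ‖(hf.toLp f : AddCircle T → ℂ) y‖ ^ 2 ∂haarAddCircle
      = ∫ y, ‖f y‖ ^ 2 ∂haarAddCircle :=
    integral_congr_ae (hf.coeFn_toLp.fun_comp fun z : ℂ => ‖z‖ ^ 2)
  rw [hnorm] at hL2
  exact sum_le_hasSum S (fun _ _ => sq_nonneg _) hL2

end fourierCoeff

theorem sum_sq_norm_fourierCoeff_le_of_translate {f : AddCircle T → ℂ}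
    (hf : MemLp f 2 haarAddCircle) (c : AddCircle T) {S : Finset ℤ}
    (hS : ∀ n ∈ S, 1 ≤ ‖1 - fourier (-n) c‖) :
    ∑ n ∈ S, ‖fourierCoeff f n‖ ^ 2 ≤ ∫ y, ‖f y - f (y - c)‖ ^ 2 ∂haarAddCircle := by
  have hg : MemLp (fun y => f y - f (y - c)) 2 haarAddCircle :=
    hf.sub (hf.comp_measurePreserving (measurePreserving_sub_right haarAddCircle c))
  calc ∑ n ∈ S, ‖fourierCoeff f n‖ ^ 2
      ≤ ∑ n ∈ S, ‖fourierCoeff (fun y => f y - f (y - c)) n‖ ^ 2 := by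
        gcongr with n hn
        rw [fourierCoeff_sub_comp_sub (hf.integrable one_le_two), norm_smul]
        exact le_mul_of_one_le_left (norm_nonneg _) (hS n hn)
    _ ≤ _ := sum_sq_norm_fourierCoeff_le hg S

theorem aestronglyMeasurable_liftIoc {t : ℝ} {E : Type*} [TopologicalSpace E] {F : ℝ → E}
    (hF : AEStronglyMeasurable F (volume.restrict (Ioc t (t + T)))) :
    AEStronglyMeasurable (liftIoc T t F) :=
  hF.comp_measurePreserving
    ((measurePreserving_subtype_coe measurableSet_Ioc).comp (measurePreserving_equivIoc T))

theorem integral_norm_sq_haarAddCircle_le {g : AddCircle T → ℂ} {K : ℝ}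
    (hg : AEStronglyMeasurable g) (hK : ∀ y, ‖g y‖ ≤ K) :
    ∫ y, ‖g y‖ ^ 2 ∂haarAddCircle ≤ T⁻¹ * (K * ∫ y, ‖g y‖) := by
  have hint : Integrable g := Integrable.of_bound hg K (ae_of_all _ hK)
  rw [integral_haarAddCircle, smul_eq_mul, ← MeasureTheory.integral_const_mul K]
  refine mul_le_mul_of_nonneg_left (integral_mono ?_ (hint.norm.const_mul K) fun y => ?_)
    (inv_nonneg.mpr hT.out.le)
  · exact (memLp_two_iff_integrable_sq_norm hg).mp (MemLp.of_bound hg K (ae_of_all _ hK))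
  · rw [sq]
    exact mul_le_mul_of_nonneg_right (hK y) (norm_nonneg _)

theorem norm_liftIoc_coe_sub_le_eVariationOn {E : Type*} [NormedAddCommGroup E] {F : ℝ → E}
    (hF : BoundedVariationOn F (Icc 0 T)) {x h : ℝ} (hx : x ∈ Ioo 0 h) (hhT : h ≤ T) :
    ‖liftIoc T 0 F x - liftIoc T 0 F (x - h)‖ ≤ (eVariationOn F (Icc 0 T)).toReal := by
  have h₁ : liftIoc T 0 F x = F x := liftIoc_coe_apply ⟨hx.1, by linarith [hx.2]⟩
  have h₂ : liftIoc T 0 F ((x : AddCircle T) - h) = F (x - h + T) := by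
    rw [← QuotientAddGroup.mk_sub, ← coe_add_period]
    exact liftIoc_coe_apply ⟨by linarith [hx.1], by linarith [hx.2]⟩
  rw [h₁, h₂, ← dist_eq_norm]
  exact hF.dist_le ⟨hx.1.le, by linarith [hx.2]⟩ ⟨by linarith [hx.1], by linarith [hx.2]⟩

theorem norm_liftIoc_coe_sub_le_variationOnFromTo {E : Type*} [NormedAddCommGroup E]
    {F : ℝ → E} (hF : BoundedVariationOn F (Icc 0 T)) {x h : ℝ} (hx : x ∈ Ioo h T) (hh : 0 ≤ h) :
    ‖liftIoc T 0 F x - liftIoc T 0 F (x - h)‖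
      ≤ variationOnFromTo F (Icc 0 T) 0 x - variationOnFromTo F (Icc 0 T) 0 (x - h) := by
  have h₁ : liftIoc T 0 F x = F x := liftIoc_coe_apply ⟨by linarith [hx.1], by linarith [hx.2]⟩
  have h₂ : liftIoc T 0 F ((x : AddCircle T) - h) = F (x - h) := by
    rw [← QuotientAddGroup.mk_sub]
    exact liftIoc_coe_apply ⟨by linarith [hx.1], by linarith [hx.2]⟩
  have hx' : x ∈ Icc 0 T := ⟨by linarith [hx.1], hx.2.le⟩
  have hxh : x - h ∈ Icc 0 T := ⟨by linarith [hx.1], by linarith [hx.2]⟩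
  rw [h₁, h₂, ← dist_eq_norm, dist_comm, variationOnFromTo.sub_right
    hF.locallyBoundedVariationOn ⟨le_rfl, hx'.1.trans hx'.2⟩ hx' hxh]
  exact hF.locallyBoundedVariationOn.dist_le_variationOnFromTo hxh hx' (by linarith)

theorem integral_norm_sub_comp_sub_liftIoc_le {F : ℝ → ℂ} {M h : ℝ}
    (hFm : AEStronglyMeasurable F (volume.restrict (Ioc 0 T))) (hFM : ∀ x, ‖F x‖ ≤ M)
    (hF : BoundedVariationOn F (Icc 0 T)) (hh : 0 ≤ h) (hhT : h ≤ T) :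
    ∫ y, ‖liftIoc T 0 F y - liftIoc T 0 F (y - h)‖
      ≤ 2 * h * (eVariationOn F (Icc 0 T)).toReal := by
  set f := liftIoc T 0 F
  set W := variationOnFromTo F (Icc 0 T) 0
  have hT0 : 0 < T := hT.out
  have hf : AEStronglyMeasurable f := aestronglyMeasurable_liftIoc (by rwa [zero_add])
  have hfM : ∀ y, ‖f y‖ ≤ M := fun y => hFM _
  have hg : Integrable (fun y => ‖f y - f (y - h)‖) := by
    refine (Integrable.of_bound (hf.sub (hf.comp_measurePreserving
      (measurePreserving_sub_right volume _))) (2 * M) (ae_of_all _ fun y => ?_)).norm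
    exact (norm_sub_le (f y) (f (y - h))).trans (by linarith [hfM y, hfM (y - h)])
  have hgI : IntervalIntegrable (fun x : ℝ => ‖f x - f (x - h)‖) volume 0 T := by
    rw [intervalIntegrable_iff_integrableOn_Ioc_of_le hT0.le]
    have := (AddCircle.measurePreserving_mk T 0).integrable_comp_of_integrable hg
    rwa [zero_add] at this
  have hgI₁ : IntervalIntegrable (fun x : ℝ => ‖f x - f (x - h)‖) volume 0 h :=
    hgI.mono_set (by rw [uIcc_of_le hh, uIcc_of_le hT0.le]; exact Icc_subset_Icc le_rfl hhT)
  have hgI₂ : IntervalIntegrable (fun x : ℝ => ‖f x - f (x - h)‖) volume h T :=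
    hgI.mono_set (by rw [uIcc_of_le hhT, uIcc_of_le hT0.le]; exact Icc_subset_Icc hh le_rfl)
  have hWT : W T - W 0 = (eVariationOn F (Icc 0 T)).toReal := by
    simp only [W, variationOnFromTo.self, variationOnFromTo.eq_of_le _ _ hT0.le, inter_self,
      sub_zero]
  calc ∫ y, ‖f y - f (y - h)‖ = ∫ x in 0..0 + T, ‖f x - f (x - h)‖ :=
        (AddCircle.intervalIntegral_preimage T 0 _).symm
    _ = (∫ x in 0..h, ‖f x - f (x - h)‖) + ∫ x in (0 + h)..T, ‖f x - f (x - h)‖ := by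
        simp only [zero_add, integral_add_adjacent_intervals hgI₁ hgI₂]
    _ ≤ h * (eVariationOn F (Icc 0 T)).toReal + h * (W T - W 0) := by
        gcongr
        · simpa using integral_mono_on_of_le_Ioo hh hgI₁ intervalIntegrable_const
            fun x hx => norm_liftIoc_coe_sub_le_eVariationOn hF hx hhT
        · refine (variationOnFromTo.monotoneOn hF.locallyBoundedVariationOn ⟨le_rfl, hT0.le⟩
            ).intervalIntegral_le_of_le_sub_comp_sub (by rwa [zero_add]) (fun x hx => ?_) hh
            (by linarith)
          exact norm_liftIoc_coe_sub_le_variationOnFromTo hF (by rwa [zero_add] at hx) hh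
    _ = 2 * h * (eVariationOn F (Icc 0 T)).toReal := by rw [hWT]; ring

end AddCircle

section TwoPi

open Real

local instance : Fact (0 < 2 * π) := ⟨two_pi_pos⟩

theorem fc_eq_fourierCoeff_liftIoc (F : ℝ → ℂ) (n : ℤ) :
    fc F n = fourierCoeff (liftIoc (2 * π) 0 F) n := by
  rw [fourierCoeff_eq_intervalIntegral _ n 0, zero_add, fc, Complex.real_smul]
  congr 1
  · push_cast; ring
  refine integral_congr_ae (ae_of_all _ fun x hx => ?_)
  rw [uIoc_of_le two_pi_pos.le] at hx
  rw [liftIoc_coe_apply (by rwa [zero_add]), fourier_coe_apply, smul_eq_mul, mul_comm]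
  have hπ : (π : ℂ) ≠ 0 := Complex.ofReal_ne_zero.mpr pi_ne_zero
  push_cast
  field_simp

theorem blockSq_le_mul_eVariationOn_div_pow {F : ℝ → ℂ} {M : ℝ}
    (hFm : AEStronglyMeasurable F (volume.restrict (Ioc 0 (2 * π)))) (hFM : ∀ x, ‖F x‖ ≤ M)
    (hF : BoundedVariationOn F (Icc 0 (2 * π))) (j : ℕ) :
    blockSq F j ≤ M * (eVariationOn F (Icc 0 (2 * π))).toReal / 2 ^ j := by
  set f := liftIoc (2 * π) 0 F
  set h : ℝ := 2 * π / 2 ^ (j + 2)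
  have hf : AEStronglyMeasurable f := aestronglyMeasurable_liftIoc (by rwa [zero_add])
  have hfM : ∀ y, ‖f y‖ ≤ M := fun y => hFM _
  have hg : AEStronglyMeasurable fun y => f y - f (y - h) :=
    hf.sub (hf.comp_measurePreserving (measurePreserving_sub_right volume _))
  have hgM : ∀ y, ‖f y - f (y - h)‖ ≤ 2 * M := fun y =>
    (norm_sub_le _ _).trans (by linarith [hfM y, hfM (y - h)])
  have hfL2 : MemLp f 2 haarAddCircle :=
    memLp_haarAddCircle_iff.mpr (MemLp.of_bound hf M (ae_of_all _ hfM))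
  calc blockSq F j
      = ∑ n ∈ (Finset.Icc (-(2 ^ (j + 1) : ℤ)) (2 ^ (j + 1))).filter
          (fun n => 2 ^ j ≤ n.natAbs ∧ n.natAbs < 2 ^ (j + 1)), ‖fourierCoeff f n‖ ^ 2 := by
        simp only [blockSq, fc_eq_fourierCoeff_liftIoc, f]
    _ ≤ ∫ y, ‖f y - f (y - h)‖ ^ 2 ∂haarAddCircle := by
        refine sum_sq_norm_fourierCoeff_le_of_translate hfL2 _ fun n hn => ?_
        obtain ⟨-, hn₁, hn₂⟩ := Finset.mem_filter.mp hn
        apply one_le_norm_one_sub_fourier_dyadic two_pi_pos <;> rw [← Int.natCast_natAbs]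
        · exact_mod_cast hn₁
        · exact_mod_cast hn₂.le
    _ ≤ (2 * π)⁻¹ * (2 * M * ∫ y, ‖f y - f (y - h)‖) :=
        integral_norm_sq_haarAddCircle_le hg hgM
    _ ≤ (2 * π)⁻¹ * (2 * M * (2 * h * (eVariationOn F (Icc 0 (2 * π))).toReal)) := by
        gcongr
        · linarith [(norm_nonneg _).trans (hFM 0)]
        · refine integral_norm_sub_comp_sub_liftIoc_le hFm hFM hF (by positivity) ?_
          exact div_le_self two_pi_pos.le (one_le_pow₀ one_le_two)
    _ = M * (eVariationOn F (Icc 0 (2 * π))).toReal / 2 ^ j := by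
        simp only [h]; field_simp; ring

end TwoPi

/-- High-frequency block estimate: for `F` bounded by `1`, supported on `k` disjoint
segments of length at most `2π/2^m`, with mean zero on each segment and total
variation `O(k)`, the squared `L²` norm of the dyadic block `j > m` is at most
`C·μ_m/2^{j-m} = C·k/2^j`. -/
theorem stmt_5 : ∀ Cv > (0 : ℝ), ∃ C > (0 : ℝ), ∀ (F : ℝ → ℂ) (k m j : ℕ) (u v : ℕ → ℝ),
    IntervalIntegrable F volume 0 (2 * Real.pi) →
    (∀ i < k, u i < v i ∧ v i - u i ≤ 2 * Real.pi / 2 ^ m ∧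
      Set.Icc (u i) (v i) ⊆ Set.Icc 0 (2 * Real.pi)) →
    (∀ i < k, ∀ i' < k, i ≠ i' → Disjoint (Set.Icc (u i) (v i)) (Set.Icc (u i') (v i'))) →
    (∀ i < k, (∫ x in (u i)..(v i), F x) = 0) →
    (∀ x, ‖F x‖ ≤ 1) →
    (∀ x ∈ Set.Icc (0 : ℝ) (2 * Real.pi), (∀ i < k, x ∉ Set.Icc (u i) (v i)) → F x = 0) →
    eVariationOn F (Set.Icc 0 (2 * Real.pi)) ≤ ENNReal.ofReal (Cv * k) →
    m < j →
    blockSq F j ≤ C * ((k : ℝ) / 2 ^ m) / 2 ^ (j - m) := by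
  intro Cv hCv
  refine ⟨Cv, hCv, fun F k m j u v hFI _ _ _ hFM _ hvar hmj => ?_⟩
  have hBV : BoundedVariationOn F (Icc 0 (2 * Real.pi)) :=
    ne_top_of_le_ne_top ENNReal.ofReal_ne_top hvar
  have hV : (eVariationOn F (Icc 0 (2 * Real.pi))).toReal ≤ Cv * k :=
    ENNReal.toReal_le_of_le_ofReal (by positivity) hvar
  calc blockSq F j ≤ 1 * (eVariationOn F (Icc 0 (2 * Real.pi))).toReal / 2 ^ j :=
        blockSq_le_mul_eVariationOn_div_pow hFI.1.aestronglyMeasurable hFM hBV j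
    _ ≤ Cv * k / 2 ^ j := by rw [one_mul]; gcongr
    _ = Cv * ((k : ℝ) / 2 ^ m) / 2 ^ (j - m) := by
        rw [← pow_sub_mul_pow (2 : ℝ) hmj.le]
        field_simp
end

section
/- For any interval I and integrable A, the A_0-measure satisfies ∫_I min(|A|,1) ≤ A_0(I) ≤ ∫_I |A|, and also min(|∫_I A|, |I|) ≤ A_0(I) ≤ |I|. -/
/-!
On a subinterval `I` one has `∫_I min (|A|, 1) ≤ min (|I|, |∫_I A|) + (∫_I |A| - |∫_I A|)`,
and the cancellation defect `∫_I |A| - |∫_I A|` is at most `2 ∫_I |A - c|` for every constant `c`.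
Summing over a partition of `[a, b]` bounds `∫ min (|A|, 1)` by `A0 A a b` plus twice the `L¹`
distance from `A` to a step function; taking the step function to sample a uniformly continuous
`L¹`-approximation of `A` on a fine partition makes that distance arbitrarily small. The upper
bounds hold term by term, since integrals over non-overlapping subintervals add up to at most
the integral over `[a, b]`.
-/

open MeasureTheory intervalIntegral

/-- The `A₀`-measure of an interval `[a,b]`: the supremum of `Σ min(|Iᵢ|, |∫_{Iᵢ} A|)`
over finite families of non-overlapping subintervals of `[a,b]`. -/
noncomputable def A0 (A : ℝ → ℝ) (a b : ℝ) : ℝ :=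
  sSup { w : ℝ | ∃ (k : ℕ) (u v : ℕ → ℝ),
    (∀ i < k, a ≤ u i ∧ u i ≤ v i ∧ v i ≤ b) ∧
    (∀ i < k, ∀ i' < k, i ≠ i' → Disjoint (Set.Ioo (u i) (v i)) (Set.Ioo (u i') (v i'))) ∧
    w = ∑ i ∈ Finset.range k, min (v i - u i) |∫ x in (u i)..(v i), A x| }

open Set

variable {A f : ℝ → ℝ} {a b : ℝ}

lemma MeasureTheory.IntegrableOn.intervalIntegrable_of_mem_Icc (hf : IntegrableOn f (Icc a b))
    {u v : ℝ} (hu : u ∈ Icc a b) (hv : v ∈ Icc a b) : IntervalIntegrable f volume u v :=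
  (hf.mono_set (uIcc_subset_Icc hu hv)).intervalIntegrable

lemma IntervalIntegrable.min_abs_one {p q : ℝ} (hf : IntervalIntegrable f volume p q) :
    IntervalIntegrable (fun x => min |f x| 1) volume p q :=
  hf.mono_fun (hf.def'.aestronglyMeasurable.norm.inf aestronglyMeasurable_const) <|
    ae_of_all _ fun x => by
      simp only [Real.norm_eq_abs, abs_of_nonneg (le_min (abs_nonneg (f x)) zero_le_one)]
      exact min_le_left _ _

lemma sum_integral_le_integral_of_disjoint (hab : a ≤ b) (hf : IntegrableOn f (Icc a b))
    (hf0 : 0 ≤ f) {k : ℕ} {u v : ℕ → ℝ}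
    (hs : ∀ i < k, a ≤ u i ∧ u i ≤ v i ∧ v i ≤ b)
    (hd : ∀ i < k, ∀ i' < k, i ≠ i' → Disjoint (Ioo (u i) (v i)) (Ioo (u i') (v i'))) :
    ∑ i ∈ Finset.range k, ∫ x in u i..v i, f x ≤ ∫ x in a..b, f x := by
  have hsub : ∀ i ∈ Finset.range k, Ioo (u i) (v i) ⊆ Icc a b := fun i hi =>
    have hi := hs i (Finset.mem_range.1 hi)
    Ioo_subset_Icc_self.trans (Icc_subset_Icc hi.1 hi.2.2)
  calc ∑ i ∈ Finset.range k, ∫ x in u i..v i, f x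
      = ∑ i ∈ Finset.range k, ∫ x in Ioo (u i) (v i), f x :=
        Finset.sum_congr rfl fun i hi => by
          rw [integral_of_le (hs i (Finset.mem_range.1 hi)).2.1, integral_Ioc_eq_integral_Ioo]
    _ = ∫ x in ⋃ i ∈ Finset.range k, Ioo (u i) (v i), f x :=
        (integral_biUnion_finset _ (fun _ _ => measurableSet_Ioo)
          (fun i hi i' hi' hne => hd i (by simpa using hi) i' (by simpa using hi') hne)
          (fun i hi => hf.mono_set (hsub i hi))).symm
    _ ≤ ∫ x in Icc a b, f x :=
        setIntegral_mono_set hf (Filter.Eventually.of_forall hf0)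
          (iUnion₂_subset hsub).eventuallyLE
    _ = ∫ x in a..b, f x := by rw [integral_Icc_eq_integral_Ioc, integral_of_le hab]

lemma integral_abs_sub_abs_integral_le {p q : ℝ} (hpq : p ≤ q)
    (hf : IntervalIntegrable f volume p q) (c : ℝ) :
    (∫ x in p..q, |f x|) - |∫ x in p..q, f x| ≤ 2 * ∫ x in p..q, |f x - c| := by
  have hfc : IntervalIntegrable (fun x => f x - c) volume p q := hf.sub intervalIntegrable_const
  have h_abs : ∫ x in p..q, |f x| ≤ (q - p) * |c| + ∫ x in p..q, |f x - c| :=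
    calc ∫ x in p..q, |f x| ≤ ∫ x in p..q, (|c| + |f x - c|) :=
          integral_mono_on hpq hf.abs (intervalIntegrable_const.add hfc.abs) fun x _ => by
            simpa using abs_add_le c (f x - c)
      _ = (q - p) * |c| + ∫ x in p..q, |f x - c| := by
          rw [integral_add intervalIntegrable_const hfc.abs, intervalIntegral.integral_const,
            smul_eq_mul]
  have h_split : ∫ x in p..q, f x = (q - p) * c + ∫ x in p..q, (f x - c) := by
    rw [integral_sub hf intervalIntegrable_const, intervalIntegral.integral_const, smul_eq_mul]
    ring
  have h_const : (q - p) * |c| ≤ |∫ x in p..q, f x| + ∫ x in p..q, |f x - c| :=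
    calc (q - p) * |c| = |(∫ x in p..q, f x) - ∫ x in p..q, (f x - c)| := by
          rw [h_split, add_sub_cancel_right, abs_mul, abs_of_nonneg (sub_nonneg.2 hpq)]
      _ ≤ |∫ x in p..q, f x| + |∫ x in p..q, (f x - c)| := abs_sub _ _
      _ ≤ |∫ x in p..q, f x| + ∫ x in p..q, |f x - c| :=
          add_le_add_right (abs_integral_le_integral_abs hpq) _
  linarith

lemma integral_min_abs_one_le {p q : ℝ} (hpq : p ≤ q) (hf : IntervalIntegrable f volume p q) :
    ∫ x in p..q, min |f x| 1
      ≤ min (q - p) |∫ x in p..q, f x| + ((∫ x in p..q, |f x|) - |∫ x in p..q, f x|) := by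
  have h_abs : ∫ x in p..q, min |f x| 1 ≤ ∫ x in p..q, |f x| :=
    integral_mono_on hpq hf.min_abs_one hf.abs fun x _ => min_le_left _ _
  have h_one : ∫ x in p..q, min |f x| 1 ≤ q - p := by
    simpa using integral_mono_on hpq hf.min_abs_one intervalIntegrable_const
      fun x _ => min_le_right |f x| 1
  have := abs_integral_le_integral_abs (f := f) (μ := volume) hpq
  rcases min_cases (q - p) |∫ x in p..q, f x| with ⟨h, -⟩ | ⟨h, -⟩ <;> rw [h] <;> linarith

def A0Sums (A : ℝ → ℝ) (a b : ℝ) : Set ℝ :=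
  { w : ℝ | ∃ (k : ℕ) (u v : ℕ → ℝ),
    (∀ i < k, a ≤ u i ∧ u i ≤ v i ∧ v i ≤ b) ∧
    (∀ i < k, ∀ i' < k, i ≠ i' → Disjoint (Ioo (u i) (v i)) (Ioo (u i') (v i'))) ∧
    w = ∑ i ∈ Finset.range k, min (v i - u i) |∫ x in u i..v i, A x| }

lemma A0_eq_sSup : A0 A a b = sSup (A0Sums A a b) := rfl

lemma le_integral_of_mem_A0Sums (hab : a ≤ b) (hf : IntegrableOn f (Icc a b)) (hf0 : 0 ≤ f)
    (hterm : ∀ u v, a ≤ u → u ≤ v → v ≤ b → min (v - u) |∫ x in u..v, A x| ≤ ∫ x in u..v, f x) :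
    ∀ w ∈ A0Sums A a b, w ≤ ∫ x in a..b, f x := by
  rintro w ⟨k, u, v, hs, hd, rfl⟩
  calc ∑ i ∈ Finset.range k, min (v i - u i) |∫ x in u i..v i, A x|
      ≤ ∑ i ∈ Finset.range k, ∫ x in u i..v i, f x :=
        Finset.sum_le_sum fun i hi =>
          have hi := hs i (Finset.mem_range.1 hi)
          hterm _ _ hi.1 hi.2.1 hi.2.2
    _ ≤ ∫ x in a..b, f x := sum_integral_le_integral_of_disjoint hab hf hf0 hs hd

lemma A0Sums_nonempty : (A0Sums A a b).Nonempty := ⟨0, 0, 0, 0, by simp, by simp, by simp⟩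

lemma le_sub_of_mem_A0Sums (hab : a ≤ b) : ∀ w ∈ A0Sums A a b, w ≤ b - a := by
  simpa using le_integral_of_mem_A0Sums (f := fun _ => 1) hab
    (integrableOn_const measure_Icc_lt_top.ne) (fun _ => zero_le_one)
    fun u v _ _ _ => by simp

lemma A0_le_integral (hab : a ≤ b) (hf : IntegrableOn f (Icc a b)) (hf0 : 0 ≤ f)
    (hterm : ∀ u v, a ≤ u → u ≤ v → v ≤ b → min (v - u) |∫ x in u..v, A x| ≤ ∫ x in u..v, f x) :
    A0 A a b ≤ ∫ x in a..b, f x := by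
  rw [A0_eq_sSup]
  exact csSup_le A0Sums_nonempty (le_integral_of_mem_A0Sums hab hf hf0 hterm)

lemma A0_le_sub (hab : a ≤ b) : A0 A a b ≤ b - a := by
  rw [A0_eq_sSup]
  exact csSup_le A0Sums_nonempty (le_sub_of_mem_A0Sums hab)

lemma A0_le_integral_abs (hab : a ≤ b) (hA : IntegrableOn A (Icc a b)) :
    A0 A a b ≤ ∫ x in a..b, |A x| :=
  A0_le_integral hab hA.abs (fun x => abs_nonneg (A x)) fun _ _ _ huv _ =>
    (min_le_right _ _).trans (abs_integral_le_integral_abs huv)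

lemma sum_le_A0 (hab : a ≤ b) {k : ℕ} {u v : ℕ → ℝ}
    (hs : ∀ i < k, a ≤ u i ∧ u i ≤ v i ∧ v i ≤ b)
    (hd : ∀ i < k, ∀ i' < k, i ≠ i' → Disjoint (Ioo (u i) (v i)) (Ioo (u i') (v i'))) :
    ∑ i ∈ Finset.range k, min (v i - u i) |∫ x in u i..v i, A x| ≤ A0 A a b := by
  rw [A0_eq_sSup]
  exact le_csSup ⟨b - a, le_sub_of_mem_A0Sums hab⟩ ⟨k, u, v, hs, hd, rfl⟩

lemma min_sub_abs_integral_le_A0 (hab : a ≤ b) : min (b - a) |∫ x in a..b, A x| ≤ A0 A a b := by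
  simpa using sum_le_A0 (A := A) (k := 1) (u := fun _ => a) (v := fun _ => b) hab
    (fun _ _ => ⟨le_rfl, hab, le_rfl⟩) fun i hi i' hi' hne => by omega

lemma integral_min_abs_one_le_A0_add (hab : a ≤ b) (hA : IntegrableOn A (Icc a b)) {n : ℕ}
    {t : ℕ → ℝ} (ht : Monotone t) (ht0 : t 0 = a) (htn : t n = b) (c : ℕ → ℝ) :
    ∫ x in a..b, min |A x| 1
      ≤ A0 A a b + 2 * ∑ i ∈ Finset.range n, ∫ x in t i..t (i + 1), |A x - c i| := by
  have hmem : ∀ i ≤ n, t i ∈ Icc a b := fun i hi => ⟨ht0 ▸ ht (Nat.zero_le i), htn ▸ ht hi⟩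
  have hAi : ∀ i < n, IntervalIntegrable A volume (t i) (t (i + 1)) := fun i hi =>
    hA.intervalIntegrable_of_mem_Icc (hmem i hi.le) (hmem (i + 1) hi)
  have hsum : ∑ i ∈ Finset.range n, min (t (i + 1) - t i) |∫ x in t i..t (i + 1), A x|
      ≤ A0 A a b :=
    sum_le_A0 hab (fun i hi => ⟨(hmem i hi.le).1, ht i.le_succ, (hmem (i + 1) hi).2⟩)
      fun i _ i' _ hne => ht.pairwise_disjoint_on_Ioo_succ hne
  calc ∫ x in a..b, min |A x| 1
      = ∑ i ∈ Finset.range n, ∫ x in t i..t (i + 1), min |A x| 1 := by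
        rw [sum_integral_adjacent_intervals fun i hi => (hAi i hi).min_abs_one, ht0, htn]
    _ ≤ ∑ i ∈ Finset.range n, (min (t (i + 1) - t i) |∫ x in t i..t (i + 1), A x|
          + 2 * ∫ x in t i..t (i + 1), |A x - c i|) :=
        Finset.sum_le_sum fun i hi => by
          have hi := Finset.mem_range.1 hi
          linarith [integral_min_abs_one_le (ht i.le_succ) (hAi i hi),
            integral_abs_sub_abs_integral_le (ht i.le_succ) (hAi i hi) (c i)]
    _ ≤ A0 A a b + 2 * ∑ i ∈ Finset.range n, ∫ x in t i..t (i + 1), |A x - c i| := by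
        rw [Finset.sum_add_distrib, ← Finset.mul_sum]
        exact add_le_add_left hsum _

lemma sum_integral_abs_sub_const_le {g : ℝ → ℝ} (hg : Continuous g)
    (hA : IntegrableOn A (Icc a b)) {n : ℕ} {t c : ℕ → ℝ} (ht : Monotone t) (ht0 : t 0 = a)
    (htn : t n = b) {η : ℝ} (hη : ∀ i < n, ∀ x ∈ Icc (t i) (t (i + 1)), |g x - c i| ≤ η) :
    ∑ i ∈ Finset.range n, ∫ x in t i..t (i + 1), |A x - c i|
      ≤ (∫ x in a..b, |A x - g x|) + η * (b - a) := by
  have hmem : ∀ i ≤ n, t i ∈ Icc a b := fun i hi => ⟨ht0 ▸ ht (Nat.zero_le i), htn ▸ ht hi⟩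
  have hAgi : ∀ i < n, IntervalIntegrable (fun x => |A x - g x|) volume (t i) (t (i + 1)) :=
    fun i hi => ((hA.intervalIntegrable_of_mem_Icc (hmem i hi.le) (hmem (i + 1) hi)).sub
      (hg.intervalIntegrable _ _)).abs
  calc ∑ i ∈ Finset.range n, ∫ x in t i..t (i + 1), |A x - c i|
      ≤ ∑ i ∈ Finset.range n, ∫ x in t i..t (i + 1), (|A x - g x| + η) :=
        Finset.sum_le_sum fun i hi => by
          have hi := Finset.mem_range.1 hi
          refine integral_mono_on (ht i.le_succ)
            ((hA.intervalIntegrable_of_mem_Icc (hmem i hi.le) (hmem (i + 1) hi)).sub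
              intervalIntegrable_const).abs
            ((hAgi i hi).add intervalIntegrable_const) fun x hx => ?_
          calc |A x - c i| ≤ |A x - g x| + |g x - c i| := abs_sub_le _ _ _
            _ ≤ |A x - g x| + η := add_le_add_right (hη i hi x hx) _
    _ = (∫ x in a..b, |A x - g x|) + η * (b - a) := by
        rw [Finset.sum_congr rfl fun i hi =>
            integral_add (hAgi i (Finset.mem_range.1 hi)) intervalIntegrable_const,
          Finset.sum_add_distrib, sum_integral_adjacent_intervals hAgi, ht0, htn]
        simp only [intervalIntegral.integral_const, smul_eq_mul, ← Finset.sum_mul,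
          Finset.sum_range_sub t, ht0, htn]
        ring

lemma exists_continuous_integral_abs_sub_le (hab : a ≤ b) (hA : IntegrableOn A (Icc a b))
    {ε : ℝ} (hε : 0 < ε) :
    ∃ g : ℝ → ℝ, Continuous g ∧ UniformContinuous g ∧ ∫ x in a..b, |A x - g x| ≤ ε := by
  obtain ⟨g, hg_supp, hg_close, hg_cont, hg_int⟩ :=
    ((integrable_indicator_iff measurableSet_Icc).2 hA).exists_hasCompactSupport_integral_sub_le hε
  refine ⟨g, hg_cont, hg_supp.uniformContinuous_of_continuous hg_cont, ?_⟩
  calc ∫ x in a..b, |A x - g x|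
      = ∫ x in Ioc a b, ‖(Icc a b).indicator A x - g x‖ := by
        rw [integral_of_le hab]
        refine setIntegral_congr_fun measurableSet_Ioc fun x hx => ?_
        rw [indicator_of_mem (Ioc_subset_Icc_self hx), Real.norm_eq_abs]
    _ ≤ ∫ x, ‖(Icc a b).indicator A x - g x‖ :=
        setIntegral_le_integral
          (((integrable_indicator_iff measurableSet_Icc).2 hA).sub hg_int).norm
          (Filter.Eventually.of_forall fun _ => norm_nonneg _)
    _ ≤ ε := hg_close

lemma exists_partition_mesh_lt (hab : a ≤ b) {δ : ℝ} (hδ : 0 < δ) :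
    ∃ (n : ℕ) (t : ℕ → ℝ), Monotone t ∧ t 0 = a ∧ t n = b ∧ ∀ i, t (i + 1) - t i < δ := by
  obtain ⟨n, hn⟩ := exists_nat_gt ((b - a) / δ)
  have hn0 : (0 : ℝ) < n := lt_of_le_of_lt (div_nonneg (sub_nonneg.2 hab) hδ.le) hn
  have hstep : 0 ≤ (b - a) / n := div_nonneg (sub_nonneg.2 hab) hn0.le
  refine ⟨n, fun i => a + i * ((b - a) / n), fun i j hij => ?_, by simp, ?_, fun i => ?_⟩
  · have : (i : ℝ) ≤ j := Nat.cast_le.2 hij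
    dsimp only
    gcongr
  · field_simp
    ring
  · rw [div_lt_iff₀ hδ] at hn
    have : (b - a) / n < δ := by rwa [div_lt_iff₀ hn0, mul_comm]
    push_cast
    linarith

lemma exists_partition_sum_integral_abs_sub_const_le (hab : a < b)
    (hA : IntegrableOn A (Icc a b)) {ε : ℝ} (hε : 0 < ε) :
    ∃ (n : ℕ) (t c : ℕ → ℝ), Monotone t ∧ t 0 = a ∧ t n = b ∧
      ∑ i ∈ Finset.range n, ∫ x in t i..t (i + 1), |A x - c i| ≤ ε := by
  have hba : 0 < b - a := sub_pos.2 hab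
  obtain ⟨g, hg_cont, hg_unif, hg_close⟩ :=
    exists_continuous_integral_abs_sub_le hab.le hA (half_pos hε)
  obtain ⟨δ, hδ, hg_osc⟩ :=
    Metric.uniformContinuous_iff.1 hg_unif (ε / 2 / (b - a)) (by positivity)
  obtain ⟨n, t, ht, ht0, htn, ht_mesh⟩ := exists_partition_mesh_lt hab.le hδ
  have hη : ∀ i < n, ∀ x ∈ Icc (t i) (t (i + 1)), |g x - g (t i)| ≤ ε / 2 / (b - a) :=
    fun i _ x hx => (hg_osc (by
      rw [Real.dist_eq, abs_of_nonneg (sub_nonneg.2 hx.1)]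
      linarith [ht_mesh i, hx.2])).le
  refine ⟨n, t, fun i => g (t i), ht, ht0, htn, ?_⟩
  calc ∑ i ∈ Finset.range n, ∫ x in t i..t (i + 1), |A x - g (t i)|
      ≤ (∫ x in a..b, |A x - g x|) + ε / 2 / (b - a) * (b - a) :=
        sum_integral_abs_sub_const_le hg_cont hA ht ht0 htn hη
    _ ≤ ε := by
        rw [div_mul_cancel₀ _ hba.ne']
        linarith

/-- Elementary bounds for the `A₀`-measure. -/
theorem stmt_7 (A : ℝ → ℝ) (a b : ℝ) (hab : a < b)
    (hA : IntegrableOn A (Set.Icc a b) volume) :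
    (∫ x in a..b, min |A x| 1) ≤ A0 A a b ∧
    A0 A a b ≤ ∫ x in a..b, |A x| ∧
    min |∫ x in a..b, A x| (b - a) ≤ A0 A a b ∧
    A0 A a b ≤ b - a := by
  refine ⟨?_, A0_le_integral_abs hab.le hA,
    min_comm (b - a) _ ▸ min_sub_abs_integral_le_A0 hab.le, A0_le_sub hab.le⟩
  refine le_of_forall_pos_le_add fun ε hε => ?_
  obtain ⟨n, t, c, ht, ht0, htn, h_approx⟩ :=
    exists_partition_sum_integral_abs_sub_const_le hab hA (half_pos hε)
  linarith [integral_min_abs_one_le_A0_add hab.le hA ht ht0 htn c]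
end

section
/- Define the discrepancy norm DA(I,t) = sup over subintervals I1 ⊂ I with t|I| ≤ |I1| ≤ |I| of |E_{I1}A - E_I A|. If t1 < t2 then DA(I,t1) ≥ DA(I,t2). Moreover, if t < 1/10, then DA(I,2t) ≥ (1/5)·DA(I,t). -/
open MeasureTheory intervalIntegral

/-- Average of `A` over `[u,v]`. -/
noncomputable def avg (A : ℝ → ℝ) (u v : ℝ) : ℝ := (∫ x in u..v, A x) / (v - u)

/-- The `t`-norm of discrepancy of the interval `[a,b]`. -/
noncomputable def DA (A : ℝ → ℝ) (a b t : ℝ) : ℝ :=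
  sSup { d : ℝ | ∃ u v, a ≤ u ∧ u < v ∧ v ≤ b ∧ t * (b - a) ≤ v - u ∧
    d = |avg A u v - avg A a b| }

open Set

/-!
Monotonicity is immediate since a larger `t` admits fewer subintervals. For the doubling
inequality, a subinterval `I'` of length `L < 2t|I|` has `5L < |I|`, so an interval `I₁ ⊂ I` of
length `2L` fits next to it. Both `I₁` and `I₁ ∪ I'` are admissible for `2t`, and
`3 E_{I₁ ∪ I'} A = 2 E_{I₁} A + E_{I'} A` gives `|E_{I'} A - E_I A| ≤ (3 + 2) DA(I, 2t)`.
-/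

section

variable {A : ℝ → ℝ} {a b u v : ℝ}

lemma intervalIntegrable_of_le_of_le (hA : IntegrableOn A (Icc a b)) (hu : a ≤ u) (huv : u ≤ v)
    (hv : v ≤ b) : IntervalIntegrable A volume u v :=
  (hA.mono_set (by rw [uIcc_of_le huv]; exact Icc_subset_Icc hu hv)).intervalIntegrable

lemma abs_integral_le_setIntegral_abs (hA : IntegrableOn A (Icc a b)) (hu : a ≤ u)
    (huv : u ≤ v) (hv : v ≤ b) : |∫ x in u..v, A x| ≤ ∫ x in Icc a b, |A x| :=
  calc |∫ x in u..v, A x| ≤ ∫ x in u..v, |A x| := abs_integral_le_integral_abs huv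
    _ = ∫ x in Ioc u v, |A x| := integral_of_le huv
    _ ≤ ∫ x in Icc a b, |A x| :=
      setIntegral_mono_set hA.abs (.of_forall fun _ ↦ abs_nonneg _)
        (Ioc_subset_Icc_self.trans (Icc_subset_Icc hu hv)).eventuallyLE

lemma mul_avg (huv : u ≠ v) : (v - u) * avg A u v = ∫ x in u..v, A x := by
  unfold avg
  field_simp [sub_ne_zero.2 huv.symm]

lemma mul_avg_sub_add_adjacent {p q r : ℝ} (hpq : p < q) (hqr : q < r)
    (h₁ : IntervalIntegrable A volume p q) (h₂ : IntervalIntegrable A volume q r) (c : ℝ) :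
    (r - p) * (avg A p r - c) = (q - p) * (avg A p q - c) + (r - q) * (avg A q r - c) := by
  have := integral_add_adjacent_intervals h₁ h₂
  rw [← mul_avg hpq.ne, ← mul_avg hqr.ne, ← mul_avg (hpq.trans hqr).ne] at this
  linear_combination -this

lemma le_DA (hA : IntegrableOn A (Icc a b)) {t : ℝ} (ht : 0 < t) (hu : a ≤ u) (huv : u < v)
    (hv : v ≤ b) (hlen : t * (b - a) ≤ v - u) : |avg A u v - avg A a b| ≤ DA A a b t := by
  refine le_csSup ?_ ⟨u, v, hu, huv, hv, hlen, rfl⟩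
  have htab : 0 < t * (b - a) := mul_pos ht (by linarith)
  set M := ∫ x in Icc a b, |A x|
  refine ⟨M / (t * (b - a)) + |avg A a b|, ?_⟩
  rintro d ⟨u', v', hu', huv', hv', hlen', rfl⟩
  have hM : 0 ≤ M := setIntegral_nonneg measurableSet_Icc fun _ _ ↦ abs_nonneg _
  have h_avg : |avg A u' v'| ≤ M / (t * (b - a)) :=
    calc |avg A u' v'| = |∫ x in u'..v', A x| / (v' - u') := by
          rw [avg, abs_div, abs_of_pos (sub_pos.2 huv')]
      _ ≤ M / (v' - u') := by gcongr; exact abs_integral_le_setIntegral_abs hA hu' huv'.le hv'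
      _ ≤ M / (t * (b - a)) := by gcongr
  linarith [abs_sub (avg A u' v') (avg A a b)]

lemma DA_le (hab : a < b) {t M : ℝ} (ht : t ≤ 1)
    (h : ∀ u v, a ≤ u → u < v → v ≤ b → t * (b - a) ≤ v - u → |avg A u v - avg A a b| ≤ M) :
    DA A a b t ≤ M := by
  refine csSup_le ⟨_, a, b, le_rfl, hab, le_rfl, by nlinarith, rfl⟩ ?_
  rintro d ⟨u, v, hu, huv, hv, hlen, rfl⟩
  exact h u v hu huv hv hlen

lemma DA_antitone (hab : a < b) (hA : IntegrableOn A (Icc a b)) {t₁ t₂ : ℝ} (ht₁ : 0 < t₁)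
    (h₁₂ : t₁ ≤ t₂) (ht₂ : t₂ ≤ 1) : DA A a b t₂ ≤ DA A a b t₁ :=
  DA_le hab ht₂ fun _ _ hu huv hv hlen ↦
    le_DA hA ht₁ hu huv hv (le_trans (by gcongr) hlen)

lemma abs_le_of_three_mul_eq {L x y z : ℝ} (hL : L ≠ 0) (h : 3 * L * x = L * y + 2 * L * z) :
    |y| ≤ 3 * |x| + 2 * |z| := by
  have hy : y = 3 * x - 2 * z := mul_left_cancel₀ hL (by linear_combination -h)
  calc |y| ≤ |3 * x| + |2 * z| := hy ▸ abs_sub _ _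
    _ = 3 * |x| + 2 * |z| := by norm_num [abs_mul]

lemma abs_avg_sub_le_five_mul_DA (hA : IntegrableOn A (Icc a b)) {t L : ℝ} (ht : 0 < t)
    (hL : 0 < L) (hu : a ≤ u) (hv : u + L ≤ b) (hlen : t * (b - a) ≤ L) (hshort : 5 * L ≤ b - a) :
    |avg A u (u + L) - avg A a b| ≤ 5 * DA A a b (2 * t) := by
  set D := DA A a b (2 * t)
  set c := avg A a b
  have key : ∀ x y z : ℝ, 3 * L * x = L * y + 2 * L * z → |x| ≤ D → |z| ≤ D → |y| ≤ 5 * D :=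
    fun x y z hxyz hx hz ↦ by linarith [abs_le_of_three_mul_eq hL.ne' hxyz]
  by_cases hright : u + 3 * L ≤ b
  · have := mul_avg_sub_add_adjacent (by linarith : u < u + L) (by linarith : u + L < u + 3 * L)
      (intervalIntegrable_of_le_of_le hA hu (by linarith) hv)
      (intervalIntegrable_of_le_of_le hA (by linarith) (by linarith) hright) c
    exact key (avg A u (u + 3 * L) - c) _ (avg A (u + L) (u + 3 * L) - c)
      (by linear_combination this)
      (le_DA hA (by positivity) hu (by linarith) hright (by linarith))
      (le_DA hA (by positivity) (by linarith) (by linarith) hright (by linarith))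
  · have hleft : a ≤ u - 2 * L := by linarith
    have := mul_avg_sub_add_adjacent (by linarith : u - 2 * L < u) (by linarith : u < u + L)
      (intervalIntegrable_of_le_of_le hA hleft (by linarith) (by linarith))
      (intervalIntegrable_of_le_of_le hA hu (by linarith) hv) c
    exact key (avg A (u - 2 * L) (u + L) - c) _ (avg A (u - 2 * L) u - c)
      (by linear_combination this)
      (le_DA hA (by positivity) hleft (by linarith) hv (by linarith))
      (le_DA hA (by positivity) hleft (by linarith) (by linarith) (by linarith))

lemma DA_le_five_mul_DA_two_mul (hab : a < b) (hA : IntegrableOn A (Icc a b)) {t : ℝ}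
    (ht : 0 < t) (ht₁₀ : t ≤ 1 / 10) : DA A a b t ≤ 5 * DA A a b (2 * t) := by
  refine DA_le hab (by linarith) fun u v hu huv hv hlen ↦ ?_
  by_cases hlong : 2 * t * (b - a) ≤ v - u
  · have := le_DA hA (by positivity) hu huv hv hlong
    linarith [abs_nonneg (avg A u v - avg A a b)]
  · have := abs_avg_sub_le_five_mul_DA hA ht (sub_pos.2 huv) hu (by simpa using hv) hlen
      (by nlinarith)
    rwa [add_sub_cancel] at this

end

/-- Monotonicity of the discrepancy norm in `t`, and the doubling inequality
`DA(I,2t) ≥ (1/5)·DA(I,t)` for `t < 1/10`. -/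
theorem stmt_8 (A : ℝ → ℝ) (a b : ℝ) (hab : a < b)
    (hA : IntegrableOn A (Set.Icc a b) volume) :
    (∀ t1 t2 : ℝ, 0 < t1 → t1 < t2 → t2 ≤ 1 → DA A a b t2 ≤ DA A a b t1) ∧
    (∀ t : ℝ, 0 < t → t < 1 / 10 → (1 / 5) * DA A a b t ≤ DA A a b (2 * t)) :=
  ⟨fun _ _ ht₁ h₁₂ ht₂ ↦ DA_antitone hab hA ht₁ h₁₂.le ht₂, fun t ht ht₁₀ ↦ by
    linarith [DA_le_five_mul_DA_two_mul hab hA ht ht₁₀.le]⟩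
end
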